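/- Fix m, ℓ ≥ 1. Let H be any graph of the following form: there is a vertex i, m paths P_1, …, P_m of length ℓ from i to m distinct vertices j_1, …, j_m that are pairwise vertex-disjoint except for the common endpoint i, and for each k ∈ {1,…,m} a path P̃_k of length at most ℓ−1 from i to j_k; and H = ∪_{k=1}^m (P_k ∪ P̃_k). Then |E(H)| ≥ |V(H)| + m − 1. -/

import Mathlib

/-!
Work in the mod-2 edge space of `H`, with boundary map `∂ {a, b} = a + b`. Following a path from
`i` shows that `v + i` is a boundary for every vertex `v`, so `rank ∂ ≥ |V(H)| - 1`. Each
`P_k + P̃_k` is a cycle, and these `m` cycles are independent: a vanishing sum over a nonempty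
set `S` of indices would cover the `|S| ℓ` distinct edges of the `P_k`, `k ∈ S`, by the at most
`|S| (ℓ - 1)` edges of the `P̃_k`. Rank–nullity gives `|E(H)| ≥ |V(H)| - 1 + m`.
-/

open Finset Finsupp Function

theorem LinearMap.natCard_add_natCard_le_finrank {K M N ι κ : Type*} [DivisionRing K]
    [AddCommGroup M] [Module K M] [AddCommGroup N] [Module K N] [Finite ι] [Finite κ]
    (f : M →ₗ[K] N) (W : Submodule K M) [FiniteDimensional K W]
    {u : ι → M} (hu : LinearIndependent K u) (huW : ∀ k, u k ∈ W) (hfu : ∀ k, f (u k) = 0)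
    {w : κ → N} (hw : LinearIndependent K w) (hwW : ∀ k, w k ∈ W.map f) :
    Nat.card ι + Nat.card κ ≤ Module.finrank K W := by
  have := Fintype.ofFinite ι
  have := Fintype.ofFinite κ
  rw [Nat.card_eq_fintype_card, Nat.card_eq_fintype_card,
    ← (f.domRestrict W).finrank_range_add_finrank_ker, range_domRestrict, add_comm]
  gcongr
  · have : LinearIndependent K fun k => (⟨w k, hwW k⟩ : W.map f) :=
      .of_comp (W.map f).subtype hw
    exact this.fintype_card_le_finrank
  · have : LinearIndependent K fun k => (⟨⟨u k, huW k⟩, hfu k⟩ : ker (f.domRestrict W)) :=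
      .of_comp (W.subtype ∘ₗ (ker (f.domRestrict W)).subtype) hu
    exact this.fintype_card_le_finrank

theorem Finsupp.finrank_supported {R α : Type*} [Ring R] [StrongRankCondition R] {s : Set α}
    (hs : s.Finite) : Module.finrank R (supported R R s) = s.ncard := by
  have := hs.fintype
  rw [(supportedEquivFinsupp s).finrank_eq, Module.finrank_finsupp_self,
    ← Nat.card_eq_fintype_card, Nat.card_coe_set_eq]

theorem Finsupp.linearIndependent_single_add_single {R V : Type*} [Ring R] {s : Set V} {i : V}
    (hi : i ∉ s) : LinearIndependent R fun v : s => single (v : V) (1 : R) + single i 1 := by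
  classical
  let eraseI : (V →₀ R) →ₗ[R] (V →₀ R) := LinearMap.id - (lsingle i) ∘ₗ (lapply i)
  refine LinearIndependent.of_comp eraseI ?_
  convert (linearIndependent_single_one (ι := V) (R := R)).comp _ Subtype.val_injective using 1
  ext v w
  have hv : (v : V) ≠ i := fun h => hi (h ▸ v.2)
  simp [eraseI, single_apply, hv]

theorem Finsupp.linearIndependent_add_of_card_support_lt {R α ι : Type*} [Ring R] [IsDomain R]
    {x y : ι → α →₀ R} (hx : Pairwise (Disjoint on fun k => (x k).support))
    (hy : ∀ k, (y k).support.card < (x k).support.card) :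
    LinearIndependent R (x + y) := by
  classical
  rw [linearIndependent_iff']
  intro s g hg k hk
  by_contra hgk
  -- Over `T`, the `x`-part cancels the `y`-part, but it has strictly larger support.
  set T := s.filter (g · ≠ 0)
  have hsum : ∑ k ∈ T, g k • x k = -∑ k ∈ T, g k • y k := by
    rw [eq_neg_iff_add_eq_zero, ← sum_add_distrib]
    simp_rw [← smul_add]
    rw [sum_filter_of_ne (p := (g · ≠ 0)) fun k _ h hk0 => h (by rw [hk0, zero_smul])]
    exact hg
  have hxcard : (∑ k ∈ T, g k • x k).support.card = ∑ k ∈ T, (x k).support.card := by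
    have hdisj : Pairwise (Disjoint on fun k => (g k • x k).support) := fun a b hab =>
      (hx hab).mono support_smul support_smul
    rw [support_sum_eq_biUnion _ hdisj, card_biUnion fun a _ b _ hab => hdisj hab]
    exact Finset.sum_congr rfl fun k hk => congrArg card (support_smul_eq (mem_filter.1 hk).2)
  have hycard : (-∑ k ∈ T, g k • y k).support.card ≤ ∑ k ∈ T, (y k).support.card := by
    rw [support_neg]
    exact (card_le_card (support_finsetSum.trans (biUnion_mono fun k _ => support_smul))).trans
      card_biUnion_le
  have : ∑ k ∈ T, (y k).support.card < ∑ k ∈ T, (x k).support.card :=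
    sum_lt_sum_of_nonempty ⟨k, mem_filter.2 ⟨hk, hgk⟩⟩ fun k _ => hy k
  rw [← hxcard, hsum] at this
  exact this.not_ge hycard

noncomputable section

variable {V : Type*}

def Sym2.boundary (e : Sym2 V) : V →₀ ZMod 2 :=
  Sym2.lift ⟨fun a b => single a 1 + single b 1, fun _ _ => add_comm _ _⟩ e

@[simp]
theorem Sym2.boundary_mk (a b : V) : Sym2.boundary s(a, b) = single a 1 + single b 1 := rfl

def chainBoundary : (Sym2 V →₀ ZMod 2) →ₗ[ZMod 2] V →₀ ZMod 2 :=
  linearCombination (ZMod 2) Sym2.boundary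

@[simp]
theorem chainBoundary_single (e : Sym2 V) : chainBoundary (single e 1) = e.boundary := by
  simp [chainBoundary]

def pathEdge {n : ℕ} (Q : Fin (n + 1) → V) (t : Fin n) : Sym2 V := s(Q t.castSucc, Q t.succ)

def pathChain {n : ℕ} (Q : Fin (n + 1) → V) : Sym2 V →₀ ZMod 2 :=
  ∑ t, single (pathEdge Q t) 1

theorem chainBoundary_pathChain {n : ℕ} (Q : Fin (n + 1) → V) :
    chainBoundary (pathChain Q) = single (Q (Fin.last n)) 1 + single (Q 0) 1 := by
  induction n with
  | zero => simp [pathChain, ZModModule.add_self]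
  | succ n ih =>
    have hprefix :
        pathChain Q = single (pathEdge Q (Fin.last n)) 1 + pathChain (Q ∘ Fin.castSucc) := by
      simp [pathChain, Fin.sum_univ_castSucc, pathEdge, add_comm]
    rw [hprefix, map_add, ih, chainBoundary_single, pathEdge, Sym2.boundary_mk,
      add_comm (single (Q (Fin.last n).castSucc) 1)]
    exact ZModModule.add_add_add_cancel _ _ _

theorem pathEdge_injective {n : ℕ} {Q : Fin (n + 1) → V} (hQ : Injective Q) :
    Injective (pathEdge Q) := by
  intro t t' h
  rcases Sym2.eq_iff.1 h with ⟨h₁, -⟩ | ⟨h₁, h₂⟩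
  · exact Fin.castSucc_injective _ (hQ h₁)
  · have := congrArg Fin.val (hQ h₁)
    have := congrArg Fin.val (hQ h₂)
    simp only [Fin.val_castSucc, Fin.val_succ] at *
    omega

theorem pathEdge_not_isDiag {n : ℕ} {Q : Fin (n + 1) → V} (hQ : Injective Q) (t : Fin n) :
    ¬(pathEdge Q t).IsDiag := fun h =>
  Fin.castSucc_lt_succ.ne (hQ (Sym2.mk_isDiag_iff.1 h))

theorem pathEdge_ne_of_inter_subset_singleton {n n' : ℕ} {Q : Fin (n + 1) → V}
    {Q' : Fin (n' + 1) → V} {c : V} (hQ : Injective Q) (hQQ' : ∀ t t', Q t = Q' t' → Q t = c)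
    (t : Fin n) (t' : Fin n') :
    pathEdge Q t ≠ pathEdge Q' t' := by
  intro h
  apply pathEdge_not_isDiag hQ t
  rcases Sym2.eq_iff.1 h with ⟨h₁, h₂⟩ | ⟨h₁, h₂⟩ <;>
    exact Sym2.mk_isDiag_iff.2 ((hQQ' _ _ h₁).trans (hQQ' _ _ h₂).symm)

theorem support_pathChain [DecidableEq V] {n : ℕ} {Q : Fin (n + 1) → V} (hQ : Injective Q) :
    (pathChain Q).support = univ.image (pathEdge Q) := by
  rw [pathChain, support_sum_eq_biUnion]
  · simp [Finset.ext_iff, eq_comm]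
  · intro t t' htt'
    simpa using (pathEdge_injective hQ).ne htt'

theorem card_support_pathChain {n : ℕ} {Q : Fin (n + 1) → V} (hQ : Injective Q) :
    (pathChain Q).support.card = n := by
  classical
  rw [support_pathChain hQ, card_image_of_injective _ (pathEdge_injective hQ), card_fin]

theorem card_support_pathChain_le {n : ℕ} (Q : Fin (n + 1) → V) :
    (pathChain Q).support.card ≤ n := by
  classical
  have hsub : (pathChain Q).support ⊆ univ.image (pathEdge Q) :=
    support_finsetSum.trans <| biUnion_subset.2 fun t _ =>
      support_single_subset.trans <| singleton_subset_iff.2 <| mem_image_of_mem _ (mem_univ t)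
  exact (card_le_card hsub).trans (card_image_le.trans (card_fin n).le)

theorem pathChain_mem_supported {n : ℕ} {Q : Fin (n + 1) → V} {E : Set (Sym2 V)}
    (hQE : ∀ t, pathEdge Q t ∈ E) : pathChain Q ∈ supported (ZMod 2) (ZMod 2) E :=
  sum_mem fun t _ => single_mem_supported _ _ (hQE t)

theorem single_add_single_mem_map_chainBoundary {n : ℕ} {Q : Fin (n + 1) → V} {E : Set (Sym2 V)}
    (hQE : ∀ t, pathEdge Q t ∈ E) (t : Fin (n + 1)) :
    single (Q t) 1 + single (Q 0) 1 ∈ (supported (ZMod 2) (ZMod 2) E).map chainBoundary := by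
  induction t using Fin.induction with
  | zero => simp [ZModModule.add_self]
  | succ t ih =>
    have hedge : (pathEdge Q t).boundary ∈ (supported (ZMod 2) (ZMod 2) E).map chainBoundary :=
      ⟨_, single_mem_supported _ _ (hQE t), chainBoundary_single _⟩
    convert add_mem hedge ih using 1
    rw [pathEdge, Sym2.boundary_mk, add_comm (single (Q t.castSucc) 1),
      ZModModule.add_add_add_cancel]

theorem linearIndependent_pathChain_add_pathChain {ι : Type*} {ℓ : ℕ} {L : ι → ℕ} {c : V}
    {P : ι → Fin (ℓ + 1) → V} (hP : ∀ k, Injective (P k))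
    (hPdisj : ∀ a b, a ≠ b → ∀ t t', P a t = P b t' → P a t = c)
    (Pt : (k : ι) → Fin (L k + 1) → V) (hL : ∀ k, L k < ℓ) :
    LinearIndependent (ZMod 2) fun k => pathChain (P k) + pathChain (Pt k) := by
  classical
  refine linearIndependent_add_of_card_support_lt (fun a b hab => ?_) fun k => ?_
  · simp only [onFun, support_pathChain (hP _), Finset.disjoint_left, Finset.mem_image]
    rintro _ ⟨t, -, rfl⟩ ⟨t', -, h⟩
    exact pathEdge_ne_of_inter_subset_singleton (hP a) (hPdisj a b hab) t t' h.symm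
  · rw [card_support_pathChain (hP k)]
    exact (card_support_pathChain_le _).trans_lt (hL k)

theorem ncard_add_natCard_sub_one_le_ncard {E : Set (Sym2 V)} (hE : E.Finite) {S : Set V}
    (hS : S.Finite) (i : V) {ι : Type*} [Finite ι] {z : ι → Sym2 V →₀ ZMod 2}
    (hz : LinearIndependent (ZMod 2) z) (hzE : ∀ k, z k ∈ supported (ZMod 2) (ZMod 2) E)
    (hz0 : ∀ k, chainBoundary (z k) = 0)
    (hSE : ∀ v ∈ S,
      single v 1 + single i 1 ∈ (supported (ZMod 2) (ZMod 2) E).map chainBoundary) :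
    S.ncard + Nat.card ι - 1 ≤ E.ncard := by
  have : Finite E := hE.to_subtype
  have : Finite ↥(S \ {i}) := (hS.sdiff).to_subtype
  have : FiniteDimensional (ZMod 2) (supported (ZMod 2) (ZMod 2) E) :=
    .equiv (supportedEquivFinsupp E).symm
  have key := chainBoundary.natCard_add_natCard_le_finrank _ hz hzE hz0
    (linearIndependent_single_add_single (s := S \ {i}) (by simp)) fun v => hSE v v.2.1
  rw [Nat.card_coe_set_eq, finrank_supported hE] at key
  have := S.pred_ncard_le_ncard_sdiff_singleton i
  omega

end

theorem edge_count_ge_vertex_count_add_general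
    {V : Type*} (m ℓ : ℕ) (hℓ : 1 ≤ ℓ)
    (i : V) (j : Fin m → V)
    -- the long paths `P_k`
    (P : Fin m → Fin (ℓ + 1) → V)
    (hPinj : ∀ k, Function.Injective (P k))
    (hPstart : ∀ k, P k 0 = i)
    (hPend : ∀ k, P k (Fin.last ℓ) = j k)
    (hPdisj : ∀ a b, a ≠ b → ∀ t t' : Fin (ℓ + 1), P a t = P b t' → P a t = i)
    -- the short paths `P̃_k`, of lengths `L k ≤ ℓ - 1`
    (L : Fin m → ℕ) (hL : ∀ k, L k ≤ ℓ - 1)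
    (Pt : (k : Fin m) → Fin (L k + 1) → V)
    (hPtinj : ∀ k, Function.Injective (Pt k))
    (hPtstart : ∀ k, Pt k 0 = i)
    (hPtend : ∀ k, Pt k (Fin.last (L k)) = j k)
    -- the union graph `H` and its vertex set
    (E : Set (Sym2 V))
    (hE : E = (⋃ k, ⋃ t : Fin ℓ, {s(P k t.castSucc, P k t.succ)}) ∪
              (⋃ k, ⋃ t : Fin (L k), {s(Pt k t.castSucc, Pt k t.succ)}))
    (VH : Set V)
    (hVH : VH = (⋃ k, Set.range (P k)) ∪ (⋃ k, Set.range (Pt k))) :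
    VH.ncard + m - 1 ≤ (SimpleGraph.fromEdgeSet E).edgeSet.ncard := by
  have hPE : ∀ k t, pathEdge (P k) t ∈ E := fun k t => by
    rw [hE]; exact Or.inl (Set.mem_iUnion.2 ⟨k, Set.mem_iUnion.2 ⟨t, rfl⟩⟩)
  have hPtE : ∀ k t, pathEdge (Pt k) t ∈ E := fun k t => by
    rw [hE]; exact Or.inr (Set.mem_iUnion.2 ⟨k, Set.mem_iUnion.2 ⟨t, rfl⟩⟩)
  have hedges : (SimpleGraph.fromEdgeSet E).edgeSet = E := by
    rw [SimpleGraph.edgeSet_fromEdgeSet, sdiff_eq_left, Set.disjoint_left, hE]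
    simp only [Set.mem_union, Set.mem_iUnion, Set.mem_singleton_iff]
    rintro _ (⟨k, t, rfl⟩ | ⟨k, t, rfl⟩)
    exacts [pathEdge_not_isDiag (hPinj k) t, pathEdge_not_isDiag (hPtinj k) t]
  have hspan : ∀ v ∈ VH,
      single v 1 + single i 1 ∈ (supported (ZMod 2) (ZMod 2) E).map chainBoundary := by
    intro v hv
    rw [hVH] at hv
    rcases hv with hv | hv <;> obtain ⟨k, t, rfl⟩ := Set.mem_iUnion.1 hv
    · simpa [hPstart] using single_add_single_mem_map_chainBoundary (hPE k) t
    · simpa [hPtstart] using single_add_single_mem_map_chainBoundary (hPtE k) t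
  have hcycles := linearIndependent_pathChain_add_pathChain hPinj hPdisj Pt fun k => by
    have := hL k; omega
  rw [hedges, ← Nat.card_fin m]
  refine ncard_add_natCard_sub_one_le_ncard (by rw [hE]; exact Set.toFinite _)
    (by rw [hVH]; exact Set.toFinite _) i hcycles
    (fun k => add_mem (pathChain_mem_supported (hPE k)) (pathChain_mem_supported (hPtE k)))
    (fun k => by
      simp [chainBoundary_pathChain, hPstart, hPtstart, hPend, hPtend, ZModModule.add_self])
    hspan

/-- **Lemma 5 (Mossel–Xu).** Let `H = ∪_{k=1}^m (P_k ∪ P̃_k)` where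
`P_1, …, P_m` are `m` paths of length `ℓ` from a common vertex `i` to `m`
distinct vertices `j_1, …, j_m`, pairwise vertex-disjoint except at `i`, and
each `P̃_k` is a path of length at most `ℓ - 1` from `i` to `j_k`. Then
`|E(H)| ≥ |V(H)| + m - 1`. -/
theorem edge_count_ge_vertex_count_add
    {V : Type*} (m ℓ : ℕ) (hm : 1 ≤ m) (hℓ : 1 ≤ ℓ)
    (i : V) (j : Fin m → V) (hj : Function.Injective j)
    -- the long paths `P_k`
    (P : Fin m → Fin (ℓ + 1) → V)
    (hPinj : ∀ k, Function.Injective (P k))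
    (hPstart : ∀ k, P k 0 = i)
    (hPend : ∀ k, P k (Fin.last ℓ) = j k)
    (hPdisj : ∀ a b, a ≠ b → ∀ t t' : Fin (ℓ + 1), P a t = P b t' → P a t = i)
    -- the short paths `P̃_k`, of lengths `L k ≤ ℓ - 1`
    (L : Fin m → ℕ) (hL : ∀ k, L k ≤ ℓ - 1)
    (Pt : (k : Fin m) → Fin (L k + 1) → V)
    (hPtinj : ∀ k, Function.Injective (Pt k))
    (hPtstart : ∀ k, Pt k 0 = i)
    (hPtend : ∀ k, Pt k (Fin.last (L k)) = j k)
    -- the union graph `H` and its vertex set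
    (E : Set (Sym2 V))
    (hE : E = (⋃ k, ⋃ t : Fin ℓ, {s(P k t.castSucc, P k t.succ)}) ∪
              (⋃ k, ⋃ t : Fin (L k), {s(Pt k t.castSucc, Pt k t.succ)}))
    (VH : Set V)
    (hVH : VH = (⋃ k, Set.range (P k)) ∪ (⋃ k, Set.range (Pt k))) :
    VH.ncard + m - 1 ≤ (SimpleGraph.fromEdgeSet E).edgeSet.ncard :=
  edge_count_ge_vertex_count_add_general m ℓ hℓ i j P hPinj hPstart hPend hPdisj L hL Pt hPtinj
    hPtstart hPtend E hE VH hVH
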